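/- arXiv:2210.06221 — 7 statements merged into one kernel-verified Lean document; each statement's English description precedes it below -/
import Mathlib

section
/- Let f : Σ → ℝ³ be a frontal with unit normal ν, and suppose on a coordinate neighborhood U centered at a singular point p the u-axis is the singular curve and f_u = v·h − e(u)·f_v for smooth h : U → ℝ³ and a smooth function e(u). Then the signed area density λ = det(f_u, f_v, ν) satisfies λ = v·det(h, f_v, ν). Moreover, if p is non-degenerate (dλ(p) ≠ 0), then det(h, f_v, ν)(p) ≠ 0, hence {h, f_v, ν} is a frame of ℝ³ near p. -/
open Matrix

noncomputable section

/-- `ℝ³` as `Fin 3 → ℝ`. -/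
abbrev V3 : Type := Fin 3 → ℝ

/-- Determinant of three vectors in `ℝ³` (as rows). -/
def det3 (a b c : V3) : ℝ := Matrix.det (Matrix.of ![a, b, c])

/-- Partial derivative in the first variable `u`. -/
def du {E : Type*} [NormedAddCommGroup E] [NormedSpace ℝ E] (g : ℝ × ℝ → E) (q : ℝ × ℝ) : E :=
  fderiv ℝ g q (1, 0)

/-- Partial derivative in the second variable `v`. -/
def dv {E : Type*} [NormedAddCommGroup E] [NormedSpace ℝ E] (g : ℝ × ℝ → E) (q : ℝ × ℝ) : E :=
  fderiv ℝ g q (0, 1)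

/-- Explicit formula for `det3`. -/
lemma det3_eq (a b c : V3) : det3 a b c =
    a 0 * b 1 * c 2 - a 0 * b 2 * c 1 - a 1 * b 0 * c 2 +
    a 1 * b 2 * c 0 + a 2 * b 0 * c 1 - a 2 * b 1 * c 0 := by
  simp [det3, Matrix.det_fin_three]

/-- with `f_u = v·h − e(u)·f_v`, the signed area density factors as
`λ = v·det(h, f_v, ν)`, and non-degeneracy at `p = (0,0)` forces `det(h, f_v, ν)(p) ≠ 0`. -/
theorem stmt1 (f ν h : ℝ × ℝ → V3) (e : ℝ → ℝ)
    (hf : ContDiff ℝ (⊤ : ℕ∞) f) (hh : ContDiff ℝ (⊤ : ℕ∞) h) (hnu : ContDiff ℝ (⊤ : ℕ∞) ν) (he : ContDiff ℝ (⊤ : ℕ∞) e)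
    (hrel : ∀ q : ℝ × ℝ, du f q = q.2 • h q - e q.1 • dv f q) :
    (∀ q : ℝ × ℝ, det3 (du f q) (dv f q) (ν q) = q.2 * det3 (h q) (dv f q) (ν q)) ∧
    (fderiv ℝ (fun q => det3 (du f q) (dv f q) (ν q)) (0, 0) ≠ 0 →
      det3 (h (0, 0)) (dv f (0, 0)) (ν (0, 0)) ≠ 0) := by
  have key : ∀ q : ℝ × ℝ, det3 (du f q) (dv f q) (ν q) = q.2 * det3 (h q) (dv f q) (ν q) := by
    intro q
    rw [hrel q, det3_eq, det3_eq]
    simp only [Pi.sub_apply, Pi.smul_apply, smul_eq_mul]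
    ring
  refine ⟨key, ?_⟩
  intro hne
  by_contra hg0
  apply hne
  have hdvf : ContDiff ℝ (⊤ : ℕ∞) (fun q => dv f q) := by
    have : ContDiff ℝ (⊤ : ℕ∞) (fderiv ℝ f) := hf.fderiv_right (by simp)
    exact this.clm_apply contDiff_const
  have comp : ∀ (g : ℝ × ℝ → V3), ContDiff ℝ (⊤ : ℕ∞) g → ∀ i : Fin 3,
      DifferentiableAt ℝ (fun q => g q i) (0, 0) := fun g hg i =>
    ((differentiable_pi.mp (hg.differentiable (by simp))) i) (0, 0)
  have hg : DifferentiableAt ℝ (fun q => det3 (h q) (dv f q) (ν q)) (0, 0) := by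
    simp only [det3_eq]
    have H := comp h hh
    have D := comp _ hdvf
    have N := comp ν hnu
    exact ((((((H 0).mul (D 1)).mul (N 2)).sub (((H 0).mul (D 2)).mul (N 1))).sub
      (((H 1).mul (D 0)).mul (N 2))).add (((H 1).mul (D 2)).mul (N 0))).add
      (((H 2).mul (D 0)).mul (N 1)) |>.sub (((H 2).mul (D 1)).mul (N 0))
  have hfun : (fun q : ℝ × ℝ => det3 (du f q) (dv f q) (ν q)) =
      fun q : ℝ × ℝ => q.2 * det3 (h q) (dv f q) (ν q) := funext key
  rw [hfun]
  have hsnd : DifferentiableAt ℝ (fun q : ℝ × ℝ => q.2) ((0, 0) : ℝ × ℝ) :=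
    differentiableAt_snd
  rw [fderiv_fun_mul hsnd hg]
  simp [hg0]
end
end

section
/- Along the singular curve (v = 0) in adapted coordinates around a singular point of the second kind of a front, dν(η) = ν_u + e(u)ν_v = −[(L̂ + e(u)M̂)/(ÊĜ − F̂²)]·(Ĝ h − F̂ f_v). Consequently, if (f, ν) is an immersion at points of the u-axis, then L̂ + e(u)M̂ ≠ 0 along the u-axis; in particular L̂(p) ≠ 0. -/
open Matrix

noncomputable section

/-- along the `u`-axis,
`dν(η) = −((L̂+e M̂)/(ÊĜ−F̂²))·(Ĝ h − F̂ f_v)`; consequently, if the pair `(f, ν)`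
is an immersion at points of the `u`-axis then `L̂ + e(u)·M̂ ≠ 0` there; in particular
`L̂(p) ≠ 0` at `p = (0,0)`. -/
theorem stmt6 (f ν h : ℝ × ℝ → V3) (e : ℝ → ℝ) (E F G L M N : ℝ × ℝ → ℝ)
    (hf : ContDiff ℝ (⊤ : ℕ∞) f) (hh : ContDiff ℝ (⊤ : ℕ∞) h) (hnu : ContDiff ℝ (⊤ : ℕ∞) ν) (he : ContDiff ℝ (⊤ : ℕ∞) e)
    (hrel : ∀ q : ℝ × ℝ, du f q = q.2 • h q - e q.1 • dv f q)
    (hνh : ∀ q : ℝ × ℝ, h q ⬝ᵥ ν q = 0) (hνfv : ∀ q : ℝ × ℝ, dv f q ⬝ᵥ ν q = 0)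
    (hunit : ∀ q : ℝ × ℝ, ν q ⬝ᵥ ν q = 1)
    (hE : ∀ q : ℝ × ℝ, E q = h q ⬝ᵥ h q) (hF : ∀ q : ℝ × ℝ, F q = h q ⬝ᵥ dv f q)
    (hG : ∀ q : ℝ × ℝ, G q = dv f q ⬝ᵥ dv f q)
    (hL : ∀ q : ℝ × ℝ, L q = -(h q ⬝ᵥ du ν q)) (hM : ∀ q : ℝ × ℝ, M q = -(h q ⬝ᵥ dv ν q))
    (hN : ∀ q : ℝ × ℝ, N q = -(dv f q ⬝ᵥ dv ν q))
    (hpos : ∀ q : ℝ × ℝ, 0 < E q * G q - F q ^ 2)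
    (hWu : ∀ q : ℝ × ℝ, du ν q =
      ((F q * (q.2 * M q - e q.1 * N q) - G q * L q) / (E q * G q - F q ^ 2)) • h q +
      ((F q * L q - E q * (q.2 * M q - e q.1 * N q)) / (E q * G q - F q ^ 2)) • dv f q)
    (hWv : ∀ q : ℝ × ℝ, dv ν q =
      ((F q * N q - G q * M q) / (E q * G q - F q ^ 2)) • h q +
      ((F q * M q - E q * N q) / (E q * G q - F q ^ 2)) • dv f q)
    (he0 : e 0 = 0) :
    (∀ u : ℝ, du ν (u, 0) + e u • dv ν (u, 0) =
      (-((L (u, 0) + e u * M (u, 0)) / (E (u, 0) * G (u, 0) - F (u, 0) ^ 2))) •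
        (G (u, 0) • h (u, 0) - F (u, 0) • dv f (u, 0))) ∧
    (∀ u : ℝ, Function.Injective (fderiv ℝ (fun q => (f q, ν q)) (u, 0)) →
      L (u, 0) + e u * M (u, 0) ≠ 0) ∧
    (Function.Injective (fderiv ℝ (fun q => (f q, ν q)) (0, 0)) → L (0, 0) ≠ 0) := by

  have hD : ∀ q : ℝ × ℝ, E q * G q - F q ^ 2 ≠ 0 := fun q => ne_of_gt (hpos q)
  have key : ∀ u : ℝ, du ν (u, 0) + e u • dv ν (u, 0) =
      (-((L (u, 0) + e u * M (u, 0)) / (E (u, 0) * G (u, 0) - F (u, 0) ^ 2))) •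
        (G (u, 0) • h (u, 0) - F (u, 0) • dv f (u, 0)) := by
    intro u
    have h1 := hWu (u, 0)
    have h2 := hWv (u, 0)
    simp only [zero_mul, zero_sub] at h1 h2
    rw [h1, h2]
    have hD0 := hD (u, 0)
    match_scalars <;> field_simp <;> ring
  have part2 : ∀ u : ℝ, Function.Injective (fderiv ℝ (fun q => (f q, ν q)) (u, 0)) →
      L (u, 0) + e u * M (u, 0) ≠ 0 := by
    intro u hinj hzero
    have hν0 : du ν (u, 0) + e u • dv ν (u, 0) = 0 := by
      rw [key u, hzero]; simp
    have hfd : du f (u, 0) + e u • dv f (u, 0) = 0 := by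
      have h3 := hrel (u, 0)
      simp only [zero_smul, zero_sub] at h3
      rw [h3]; simp
    have hdf : DifferentiableAt ℝ f (u, 0) := hf.differentiable (by simp) _
    have hdν : DifferentiableAt ℝ ν (u, 0) := hnu.differentiable (by simp) _
    have hT : fderiv ℝ (fun q => (f q, ν q)) (u, 0) ((1 : ℝ), e u) = (0, 0) := by
      rw [hdf.fderiv_prodMk hdν]
      have hsplit : ((1 : ℝ), e u) = ((1 : ℝ), (0 : ℝ)) + e u • ((0 : ℝ), (1 : ℝ)) := by
        simp [Prod.ext_iff]
      rw [hsplit]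
      simp only [ContinuousLinearMap.prod_apply, map_add, _root_.map_smul, Prod.mk_add_mk,
        Prod.mk.injEq]
      rw [Prod.smul_mk, Prod.mk_add_mk, Prod.mk.injEq]
      exact ⟨hfd, hν0⟩
    have h01 : ((1 : ℝ), e u) = (0 : ℝ × ℝ) := hinj (by rw [hT, map_zero]; rfl)
    simpa using congrArg Prod.fst h01
  refine ⟨key, part2, ?_⟩
  intro hinj
  have := part2 0 hinj
  simpa [he0] using this
end
end

section
/- Let κ be the bounded principal curvature and κ̃ the unbounded principal curvature of a front near a non-degenerate singular point p, and set κ̂ = λ·κ̃ where λ is the signed area density. If on an adapted coordinate system the principal vectors are V = (−M̂ + κF̂, L̂ − κ(vÊ − e(u)F̂)) and Ṽ = (λN̂ − κ̂Ĝ, −v(λM̂ − κ̂F̂) + e(u)(λN̂ − κ̂Ĝ)), then V and Ṽ are linearly independent at every point of a neighborhood of p. -/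
open Matrix

noncomputable section

lemma cont_dot {a b : ℝ × ℝ → V3} (ha : Continuous a) (hb : Continuous b) :
    Continuous fun q => a q ⬝ᵥ b q := by
  simp only [dotProduct]
  exact continuous_finset_sum _ fun i _ =>
    ((continuous_apply i).comp ha).mul ((continuous_apply i).comp hb)

lemma li_of_det {x y : ℝ × ℝ} (hd : x.1 * y.2 - x.2 * y.1 ≠ 0) :
    LinearIndependent ℝ ![x, y] := by
  rw [LinearIndependent.pair_iff]
  intro s t hst
  have h1 : s * x.1 + t * y.1 = 0 := congrArg Prod.fst hst
  have h2 : s * x.2 + t * y.2 = 0 := congrArg Prod.snd hst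
  constructor
  · by_contra hs
    apply hd
    have : x.1 = -(t/s) * y.1 := by field_simp; linarith
    have h2' : x.2 = -(t/s) * y.2 := by field_simp; linarith
    rw [this, h2']; ring
  · by_contra ht
    apply hd
    have : y.1 = -(s/t) * x.1 := by field_simp; linarith
    have h2' : y.2 = -(s/t) * x.2 := by field_simp; linarith
    rw [this, h2']; ring

/-- the principal vectors `V` and `Ṽ` are linearly independent
at every point of some neighborhood of the singular point `p = (0,0)`. -/
theorem stmt8 (f h : ℝ × ℝ → V3) (e : ℝ → ℝ) (E F G L M N κ κh lam : ℝ × ℝ → ℝ)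
    (hf : ContDiff ℝ (⊤ : ℕ∞) f) (hh : ContDiff ℝ (⊤ : ℕ∞) h) (he : ContDiff ℝ (⊤ : ℕ∞) e)
    (hκ : Continuous κ) (hκhc : Continuous κh) (hlamc : Continuous lam)
    (hE : ∀ q : ℝ × ℝ, E q = h q ⬝ᵥ h q) (hF : ∀ q : ℝ × ℝ, F q = h q ⬝ᵥ dv f q)
    (hG : ∀ q : ℝ × ℝ, G q = dv f q ⬝ᵥ dv f q)
    (hLc : Continuous L) (hMc : Continuous M) (hNc : Continuous N)
    (he0 : e 0 = 0) (hlam0 : lam (0, 0) = 0)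
    (hLp : L (0, 0) ≠ 0) (hκhp : κh (0, 0) ≠ 0) (hGp : G (0, 0) = 1) :
    ∃ ε > 0, ∀ q : ℝ × ℝ, dist q ((0, 0) : ℝ × ℝ) < ε →
      LinearIndependent ℝ
        ![((-(M q) + κ q * F q, L q - κ q * (q.2 * E q - e q.1 * F q)) : ℝ × ℝ),
          ((lam q * N q - κh q * G q,
            -(q.2 * (lam q * M q - κh q * F q)) + e q.1 * (lam q * N q - κh q * G q)) : ℝ × ℝ)] := by
  -- continuity of building blocks
  have hdvf : Continuous (dv f) := by
    have := (hf.continuous_fderiv (by simp))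
    exact this.clm_apply continuous_const
  have hEc : Continuous E := by
    have : Continuous fun q => h q ⬝ᵥ h q := cont_dot hh.continuous hh.continuous
    simpa [funext hE] using this
  have hFc : Continuous F := by
    have : Continuous fun q => h q ⬝ᵥ dv f q := cont_dot hh.continuous hdvf
    simpa [funext hF] using this
  have hGc : Continuous G := by
    have : Continuous fun q => dv f q ⬝ᵥ dv f q := cont_dot hdvf hdvf
    simpa [funext hG] using this
  have hec : Continuous fun q : ℝ × ℝ => e q.1 := he.continuous.comp continuous_fst
  set D : ℝ × ℝ → ℝ := fun q =>
    (-(M q) + κ q * F q) * (-(q.2 * (lam q * M q - κh q * F q)) + e q.1 * (lam q * N q - κh q * G q))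
    - (L q - κ q * (q.2 * E q - e q.1 * F q)) * (lam q * N q - κh q * G q) with hD
  have heC : Continuous e := he.continuous
  have hDc : Continuous D := by
    apply Continuous.sub <;> apply Continuous.mul <;> fun_prop
  have hlam0' : lam 0 = 0 := hlam0
  have hval : D (0, 0) = L (0, 0) * (κh (0, 0) * G (0, 0)) := by
    simp [hD, hlam0', he0, hlam0]
  have hD0 : D (0, 0) ≠ 0 := by
    rw [hval, hGp, mul_one]
    exact mul_ne_zero hLp hκhp
  have hopen : IsOpen {q : ℝ × ℝ | D q ≠ 0} := isOpen_ne.preimage hDc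
  obtain ⟨ε, hε, hball⟩ := Metric.isOpen_iff.1 hopen (0, 0) hD0
  refine ⟨ε, hε, fun q hq => ?_⟩
  have hDq : D q ≠ 0 := hball (Metric.mem_ball.2 hq)
  exact li_of_det (by simpa [hD] using hDq)
end
end

section
/- Define x = −v(M̂ − κF̂)h + ((L̂ + e(u)M̂) − vκÊ)f_v and y = (λN̂ − κ̂Ĝ)h − (λM̂ − κ̂F̂)f_v. Then ⟨x, y⟩ = 0 everywhere on U. Hence {x, y, ν} is an orthogonal frame along f wherever x, y ≠ 0. -/
open Matrix

noncomputable section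

/-- the vectors `x` and `y` built from the principal data are
orthogonal everywhere: `⟨x, y⟩ = 0`. -/
theorem stmt9 (f ν h : ℝ × ℝ → V3) (e : ℝ → ℝ) (E F G L M N κ κh lam : ℝ × ℝ → ℝ)
    (hf : ContDiff ℝ (⊤ : ℕ∞) f) (hh : ContDiff ℝ (⊤ : ℕ∞) h) (hnu : ContDiff ℝ (⊤ : ℕ∞) ν) (he : ContDiff ℝ (⊤ : ℕ∞) e)
    (hrel : ∀ q : ℝ × ℝ, du f q = q.2 • h q - e q.1 • dv f q)
    (hνh : ∀ q : ℝ × ℝ, h q ⬝ᵥ ν q = 0) (hνfv : ∀ q : ℝ × ℝ, dv f q ⬝ᵥ ν q = 0)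
    (hunit : ∀ q : ℝ × ℝ, ν q ⬝ᵥ ν q = 1)
    (hE : ∀ q : ℝ × ℝ, E q = h q ⬝ᵥ h q) (hF : ∀ q : ℝ × ℝ, F q = h q ⬝ᵥ dv f q)
    (hG : ∀ q : ℝ × ℝ, G q = dv f q ⬝ᵥ dv f q)
    (hL : ∀ q : ℝ × ℝ, L q = -(h q ⬝ᵥ du ν q)) (hM : ∀ q : ℝ × ℝ, M q = -(h q ⬝ᵥ dv ν q))
    (hN : ∀ q : ℝ × ℝ, N q = -(dv f q ⬝ᵥ dv ν q))
    (hpos : ∀ q : ℝ × ℝ, 0 < E q * G q - F q ^ 2)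
    (hlam : ∀ q : ℝ × ℝ, lam q = det3 (du f q) (dv f q) (ν q))
    (hκh : ∀ q : ℝ × ℝ, κh q ≠ 0)
    (hHrel : ∀ q : ℝ × ℝ, lam q * (G q * (L q + e q.1 * M q) - 2 * q.2 * F q * M q + q.2 * E q * N q)
      = q.2 * (E q * G q - F q ^ 2) * (lam q * κ q + κh q))
    (hKrel : ∀ q : ℝ × ℝ, lam q * (N q * (L q + e q.1 * M q) - q.2 * M q ^ 2)
      = q.2 * (E q * G q - F q ^ 2) * (κ q * κh q))
    (hκc : ContDiff ℝ (⊤ : ℕ∞) κ) :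
    ∀ q : ℝ × ℝ,
      ((-(q.2 * (M q - κ q * F q))) • h q + ((L q + e q.1 * M q) - q.2 * κ q * E q) • dv f q) ⬝ᵥ
        ((lam q * N q - κh q * G q) • h q - (lam q * M q - κh q * F q) • dv f q) = 0 := by
  intro q
  have hc : dv f q ⬝ᵥ h q = F q := by rw [hF q, dotProduct_comm]
  simp only [add_dotProduct, smul_dotProduct, dotProduct_sub, dotProduct_smul, smul_eq_mul,
    ← hE q, ← hF q, ← hG q, hc]
  linear_combination (-(M q)) * hHrel q + F q * hKrel q
end
end

section
/- (Rodrigues-type relations for fronts) Let f be a front with singular point of the second kind p, κ the bounded principal curvature with principal vector V, κ̃ the unbounded principal curvature with principal vector Ṽ, and ρ̂ = λ/κ̂ the curvature radius function of κ̃ (with κ̂ = λκ̃ nonvanishing near p). Then dν(V) = −κ·df(V) and df(Ṽ) = −ρ̂·dν(Ṽ) hold on a neighborhood of p. -/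
open Matrix

noncomputable section

lemma fderiv_pair {Em : Type*} [NormedAddCommGroup Em] [NormedSpace ℝ Em] (g : ℝ × ℝ → Em)
    (q : ℝ × ℝ) (a b : ℝ) : fderiv ℝ g q (a, b) = a • du g q + b • dv g q := by
  have h1 : ((a, b) : ℝ × ℝ) = a • ((1:ℝ), (0:ℝ)) + b • ((0:ℝ), (1:ℝ)) := by
    simp [Prod.ext_iff]
  rw [h1, map_add, _root_.map_smul, _root_.map_smul]; rfl

lemma cont_dot_s10 {x y : ℝ × ℝ → V3} (hx : Continuous x) (hy : Continuous y) :
    Continuous fun q => x q ⬝ᵥ y q := by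
  simp only [dotProduct]
  exact continuous_finset_sum _ fun i _ =>
    ((continuous_apply i).comp hx).mul ((continuous_apply i).comp hy)

/-- Rodrigues-type relations `dν(V) = −κ·df(V)` and
`df(Ṽ) = −ρ̂·dν(Ṽ)` with `ρ̂ = λ/κ̂`. -/
theorem stmt10 (f ν h : ℝ × ℝ → V3) (e : ℝ → ℝ) (E F G L M N κ κh lam lamh : ℝ × ℝ → ℝ)
    (hf : ContDiff ℝ (⊤ : ℕ∞) f) (hh : ContDiff ℝ (⊤ : ℕ∞) h) (hnu : ContDiff ℝ (⊤ : ℕ∞) ν) (he : ContDiff ℝ (⊤ : ℕ∞) e)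
    (hrel : ∀ q : ℝ × ℝ, du f q = q.2 • h q - e q.1 • dv f q)
    (hνh : ∀ q : ℝ × ℝ, h q ⬝ᵥ ν q = 0) (hνfv : ∀ q : ℝ × ℝ, dv f q ⬝ᵥ ν q = 0)
    (hunit : ∀ q : ℝ × ℝ, ν q ⬝ᵥ ν q = 1)
    (hE : ∀ q : ℝ × ℝ, E q = h q ⬝ᵥ h q) (hF : ∀ q : ℝ × ℝ, F q = h q ⬝ᵥ dv f q)
    (hG : ∀ q : ℝ × ℝ, G q = dv f q ⬝ᵥ dv f q)
    (hL : ∀ q : ℝ × ℝ, L q = -(h q ⬝ᵥ du ν q)) (hM : ∀ q : ℝ × ℝ, M q = -(h q ⬝ᵥ dv ν q))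
    (hN : ∀ q : ℝ × ℝ, N q = -(dv f q ⬝ᵥ dv ν q))
    (hpos : ∀ q : ℝ × ℝ, 0 < E q * G q - F q ^ 2)
    (hWu : ∀ q : ℝ × ℝ, du ν q =
      ((F q * (q.2 * M q - e q.1 * N q) - G q * L q) / (E q * G q - F q ^ 2)) • h q +
      ((F q * L q - E q * (q.2 * M q - e q.1 * N q)) / (E q * G q - F q ^ 2)) • dv f q)
    (hWv : ∀ q : ℝ × ℝ, dv ν q =
      ((F q * N q - G q * M q) / (E q * G q - F q ^ 2)) • h q +
      ((F q * M q - E q * N q) / (E q * G q - F q ^ 2)) • dv f q)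
    (hlam : ∀ q : ℝ × ℝ, lam q = det3 (du f q) (dv f q) (ν q))
    (hκh : ∀ q : ℝ × ℝ, κh q ≠ 0)
    (hHrel : ∀ q : ℝ × ℝ, lam q * (G q * (L q + e q.1 * M q) - 2 * q.2 * F q * M q + q.2 * E q * N q)
      = q.2 * (E q * G q - F q ^ 2) * (lam q * κ q + κh q))
    (hKrel : ∀ q : ℝ × ℝ, lam q * (N q * (L q + e q.1 * M q) - q.2 * M q ^ 2)
      = q.2 * (E q * G q - F q ^ 2) * (κ q * κh q))
    (hκc : ContDiff ℝ (⊤ : ℕ∞) κ)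
    (hlamh : ∀ q : ℝ × ℝ, lam q = q.2 * lamh q) (hlamhp : lamh (0, 0) ≠ 0) :
    ∀ q : ℝ × ℝ,
      fderiv ℝ ν q (-(M q) + κ q * F q, L q - κ q * (q.2 * E q - e q.1 * F q)) =
        (-(κ q)) • fderiv ℝ f q (-(M q) + κ q * F q, L q - κ q * (q.2 * E q - e q.1 * F q)) ∧
      fderiv ℝ f q (lam q * N q - κh q * G q,
          -(q.2 * (lam q * M q - κh q * F q)) + e q.1 * (lam q * N q - κh q * G q)) =
        (-(lam q / κh q)) • fderiv ℝ ν q (lam q * N q - κh q * G q,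
          -(q.2 * (lam q * M q - κh q * F q)) + e q.1 * (lam q * N q - κh q * G q)) := by
  have hWne : ∀ q : ℝ × ℝ, E q * G q - F q ^ 2 ≠ 0 := fun q => (hpos q).ne'
  -- continuity facts
  have cdvf : Continuous (dv f) := (hf.continuous_fderiv (by simp)).clm_apply continuous_const
  have cduν : Continuous (du ν) := (hnu.continuous_fderiv (by simp)).clm_apply continuous_const
  have cdvν : Continuous (dv ν) := (hnu.continuous_fderiv (by simp)).clm_apply continuous_const
  have cE : Continuous E := by rw [funext hE]; exact cont_dot_s10 hh.continuous hh.continuous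
  have cF : Continuous F := by rw [funext hF]; exact cont_dot_s10 hh.continuous cdvf
  have cL : Continuous L := by rw [funext hL]; exact (cont_dot_s10 hh.continuous cduν).neg
  have cM : Continuous M := by rw [funext hM]; exact (cont_dot_s10 hh.continuous cdvν).neg
  have ce : Continuous fun q : ℝ × ℝ => e q.1 := he.continuous.comp continuous_fst
  have cA : Continuous fun q : ℝ × ℝ => -(M q) + κ q * F q :=
    cM.neg.add (hκc.continuous.mul cF)
  have cB : Continuous fun q : ℝ × ℝ => L q - κ q * (q.2 * E q - e q.1 * F q) :=
    cL.sub (hκc.continuous.mul ((continuous_snd.mul cE).sub (ce.mul cF)))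
  -- on v ≠ 0
  have key1 : ∀ q : ℝ × ℝ, q.2 ≠ 0 →
      fderiv ℝ ν q (-(M q) + κ q * F q, L q - κ q * (q.2 * E q - e q.1 * F q)) +
        κ q • fderiv ℝ f q (-(M q) + κ q * F q, L q - κ q * (q.2 * E q - e q.1 * F q)) = 0 := by
    intro q hq
    have hlamne : lam q ≠ 0 := by
      intro h0
      have h2 : q.2 * (E q * G q - F q ^ 2) * κh q = 0 := by
        linear_combination -(hHrel q) + (G q * (L q + e q.1 * M q) - 2 * q.2 * F q * M q
          + q.2 * E q * N q - q.2 * (E q * G q - F q ^ 2) * κ q) * h0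
      exact mul_ne_zero (mul_ne_zero hq (hWne q)) (hκh q) h2
    have hQ1 : (-(M q) + κ q * F q) * (F q * (q.2 * M q - e q.1 * N q) - G q * L q)
        + (L q - κ q * (q.2 * E q - e q.1 * F q)) * (F q * N q - G q * M q)
        + κ q * (-(M q) + κ q * F q) * q.2 * (E q * G q - F q ^ 2) = 0 := by
      refine mul_left_cancel₀ hlamne ?_
      rw [mul_zero]
      linear_combination (-(κ q) * F q) * hHrel q + F q * hKrel q
    have hQ2 : (-(M q) + κ q * F q) * (F q * L q - E q * (q.2 * M q - e q.1 * N q))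
        + (L q - κ q * (q.2 * E q - e q.1 * F q)) * (F q * M q - E q * N q)
        + κ q * ((L q - κ q * (q.2 * E q - e q.1 * F q)) - (-(M q) + κ q * F q) * e q.1)
          * (E q * G q - F q ^ 2) = 0 := by
      refine mul_left_cancel₀ hlamne ?_
      rw [mul_zero]
      linear_combination (κ q * E q) * hHrel q + (-(E q)) * hKrel q
    rw [fderiv_pair ν, fderiv_pair f, hWu q, hWv q, hrel q]
    match_scalars
    · field_simp [show G q * E q - F q ^ 2 ≠ 0 by rw [mul_comm]; exact hWne q]
      linear_combination hQ1
    · field_simp [hWne q]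
      linear_combination hQ2
  have hdense : Dense {q : ℝ × ℝ | q.2 ≠ 0} := by
    have h1 : {q : ℝ × ℝ | q.2 ≠ 0} = (Set.univ ×ˢ {(0:ℝ)}ᶜ) := by
      ext ⟨u, v⟩; simp [Set.mem_prod]
    rw [h1]; exact dense_univ.prod (dense_compl_singleton 0)
  have cΦ : Continuous fun q : ℝ × ℝ =>
      fderiv ℝ ν q (-(M q) + κ q * F q, L q - κ q * (q.2 * E q - e q.1 * F q)) +
      κ q • fderiv ℝ f q (-(M q) + κ q * F q, L q - κ q * (q.2 * E q - e q.1 * F q)) :=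
    ((hnu.continuous_fderiv (by simp)).clm_apply (cA.prodMk cB)).add
      (hκc.continuous.smul ((hf.continuous_fderiv (by simp)).clm_apply (cA.prodMk cB)))
  have part1 : ∀ q : ℝ × ℝ,
      fderiv ℝ ν q (-(M q) + κ q * F q, L q - κ q * (q.2 * E q - e q.1 * F q)) +
        κ q • fderiv ℝ f q (-(M q) + κ q * F q, L q - κ q * (q.2 * E q - e q.1 * F q)) = 0 := by
    have h2 := Continuous.ext_on hdense cΦ (continuous_const : Continuous fun _ : ℝ × ℝ => (0 : V3))
      (fun q hq => key1 q hq)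
    exact fun q => congrFun h2 q
  intro q
  constructor
  · have h0 := eq_neg_of_add_eq_zero_left (part1 q)
    rw [h0, ← neg_smul]
  · have hk2 : κh q • fderiv ℝ f q (lam q * N q - κh q * G q,
          -(q.2 * (lam q * M q - κh q * F q)) + e q.1 * (lam q * N q - κh q * G q)) =
        (-(lam q)) • fderiv ℝ ν q (lam q * N q - κh q * G q,
          -(q.2 * (lam q * M q - κh q * F q)) + e q.1 * (lam q * N q - κh q * G q)) := by
      rw [fderiv_pair ν, fderiv_pair f, hrel q, hWu q, hWv q]
      match_scalars
      · field_simp [show G q * E q - F q ^ 2 ≠ 0 by rw [mul_comm]; exact hWne q]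
        linear_combination (G q * κh q) * hHrel q + (-(G q * lam q)) * hKrel q
      · field_simp [show G q * E q - F q ^ 2 ≠ 0 by rw [mul_comm]; exact hWne q]
        linear_combination (-(F q * κh q)) * hHrel q + (F q * lam q) * hKrel q
    calc fderiv ℝ f q (lam q * N q - κh q * G q,
          -(q.2 * (lam q * M q - κh q * F q)) + e q.1 * (lam q * N q - κh q * G q))
        = (κh q)⁻¹ • (κh q • fderiv ℝ f q (lam q * N q - κh q * G q,
            -(q.2 * (lam q * M q - κh q * F q)) + e q.1 * (lam q * N q - κh q * G q))) :=
          (inv_smul_smul₀ (hκh q) _).symm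
      _ = (κh q)⁻¹ • ((-(lam q)) • fderiv ℝ ν q (lam q * N q - κh q * G q,
            -(q.2 * (lam q * M q - κh q * F q)) + e q.1 * (lam q * N q - κh q * G q))) := by
          rw [hk2]
      _ = (-(lam q / κh q)) • fderiv ℝ ν q (lam q * N q - κh q * G q,
            -(q.2 * (lam q * M q - κh q * F q)) + e q.1 * (lam q * N q - κh q * G q)) := by
          rw [smul_smul, div_eq_inv_mul, mul_neg]
end
end

section
/- Let f be a front with a singular point of the second kind p, and let Ĉ = f + ρ̂·ν with ρ̂ = λ/κ̂ be the focal surface associated to the unbounded principal curvature. Then the vector y = (λN̂ − κ̂Ĝ)h − (λM̂ − κ̂F̂)f_v satisfies ⟨Ĉ_u, y⟩ = 0 and ⟨Ĉ_v, y⟩ = 0 on a neighborhood of p; i.e., y is a normal vector field of Ĉ, and Ĉ is a frontal near p with unit normal e₂ = y/|y|. -/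
open Matrix

noncomputable section

/-- `y = (λN̂−κ̂Ĝ)h − (λM̂−κ̂F̂)f_v` is a normal vector field of
the focal surface `Ĉ = f + (λ/κ̂)·ν`: `⟨Ĉ_u, y⟩ = ⟨Ĉ_v, y⟩ = 0`. -/
theorem stmt14 (f ν h C : ℝ × ℝ → V3) (e : ℝ → ℝ) (E F G L M N κ κh lam : ℝ × ℝ → ℝ)
    (hf : ContDiff ℝ (⊤ : ℕ∞) f) (hh : ContDiff ℝ (⊤ : ℕ∞) h) (hnu : ContDiff ℝ (⊤ : ℕ∞) ν) (he : ContDiff ℝ (⊤ : ℕ∞) e)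
    (hrel : ∀ q : ℝ × ℝ, du f q = q.2 • h q - e q.1 • dv f q)
    (hνh : ∀ q : ℝ × ℝ, h q ⬝ᵥ ν q = 0) (hνfv : ∀ q : ℝ × ℝ, dv f q ⬝ᵥ ν q = 0)
    (hunit : ∀ q : ℝ × ℝ, ν q ⬝ᵥ ν q = 1)
    (hE : ∀ q : ℝ × ℝ, E q = h q ⬝ᵥ h q) (hF : ∀ q : ℝ × ℝ, F q = h q ⬝ᵥ dv f q)
    (hG : ∀ q : ℝ × ℝ, G q = dv f q ⬝ᵥ dv f q)
    (hL : ∀ q : ℝ × ℝ, L q = -(h q ⬝ᵥ du ν q)) (hM : ∀ q : ℝ × ℝ, M q = -(h q ⬝ᵥ dv ν q))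
    (hN : ∀ q : ℝ × ℝ, N q = -(dv f q ⬝ᵥ dv ν q))
    (hpos : ∀ q : ℝ × ℝ, 0 < E q * G q - F q ^ 2)
    (hWu : ∀ q : ℝ × ℝ, du ν q =
      ((F q * (q.2 * M q - e q.1 * N q) - G q * L q) / (E q * G q - F q ^ 2)) • h q +
      ((F q * L q - E q * (q.2 * M q - e q.1 * N q)) / (E q * G q - F q ^ 2)) • dv f q)
    (hWv : ∀ q : ℝ × ℝ, dv ν q =
      ((F q * N q - G q * M q) / (E q * G q - F q ^ 2)) • h q +
      ((F q * M q - E q * N q) / (E q * G q - F q ^ 2)) • dv f q)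
    (hlam : ∀ q : ℝ × ℝ, lam q = det3 (du f q) (dv f q) (ν q))
    (hκh : ∀ q : ℝ × ℝ, κh q ≠ 0)
    (hHrel : ∀ q : ℝ × ℝ, lam q * (G q * (L q + e q.1 * M q) - 2 * q.2 * F q * M q + q.2 * E q * N q)
      = q.2 * (E q * G q - F q ^ 2) * (lam q * κ q + κh q))
    (hKrel : ∀ q : ℝ × ℝ, lam q * (N q * (L q + e q.1 * M q) - q.2 * M q ^ 2)
      = q.2 * (E q * G q - F q ^ 2) * (κ q * κh q))
    (hκc : ContDiff ℝ (⊤ : ℕ∞) κ)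
    (hC : ∀ q : ℝ × ℝ, C q = f q + (lam q / κh q) • ν q) :
    ∀ q : ℝ × ℝ,
      du C q ⬝ᵥ ((lam q * N q - κh q * G q) • h q - (lam q * M q - κh q * F q) • dv f q) = 0 ∧
      dv C q ⬝ᵥ ((lam q * N q - κh q * G q) • h q - (lam q * M q - κh q * F q) • dv f q) = 0 := by
  intro q
  by_cases hdiff : DifferentiableAt ℝ C q
  · have hfd := (hf.differentiable (by simp)).differentiableAt (x := q)
    have hnd := (hnu.differentiable (by simp)).differentiableAt (x := q)
    set ρ : ℝ × ℝ → ℝ := fun p => (C p - f p) ⬝ᵥ ν p with hρ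
    have hρval : ∀ p, ρ p = lam p / κh p := by
      intro p
      rw [hρ]
      simp only [hC p, add_sub_cancel_left, smul_dotProduct, hunit p, smul_eq_mul, mul_one]
    have hρdiff : DifferentiableAt ℝ ρ q := by
      have hg : DifferentiableAt ℝ (fun p => C p - f p) q := hdiff.sub hfd
      simp only [hρ, dotProduct]
      exact DifferentiableAt.fun_sum fun i _ =>
        ((differentiableAt_pi.mp hg i).mul (differentiableAt_pi.mp hnd i))
    have hCeq : C = fun p => f p + ρ p • ν p := by
      funext p
      rw [hC p, hρval p]
    have key : ∀ w : ℝ × ℝ, fderiv ℝ C q w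
        = fderiv ℝ f q w + (fderiv ℝ ρ q w) • ν q + ρ q • fderiv ℝ ν q w := by
      intro w
      rw [hCeq, fderiv_fun_add hfd (hρdiff.fun_smul hnd), fderiv_fun_smul hρdiff hnd]
      simp [ContinuousLinearMap.add_apply, ContinuousLinearMap.smul_apply,
        ContinuousLinearMap.smulRight_apply]
      module
    have hEq : h q ⬝ᵥ h q = E q := (hE q).symm
    have hFq : h q ⬝ᵥ dv f q = F q := (hF q).symm
    have hFq' : dv f q ⬝ᵥ h q = F q := by rw [dotProduct_comm]; exact hFq
    have hGq : dv f q ⬝ᵥ dv f q = G q := (hG q).symm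
    have hν1 : h q ⬝ᵥ ν q = 0 := hνh q
    have hν1' : ν q ⬝ᵥ h q = 0 := by rw [dotProduct_comm]; exact hν1
    have hν2 : dv f q ⬝ᵥ ν q = 0 := hνfv q
    have hν2' : ν q ⬝ᵥ dv f q = 0 := by rw [dotProduct_comm]; exact hν2
    have hD : E q * G q - F q ^ 2 ≠ 0 := (hpos q).ne'
    constructor
    · have hduC : du C q = du f q + (fderiv ℝ ρ q (1,0)) • ν q + ρ q • du ν q := key (1,0)
      rw [hduC, hrel q, hWu q, hρval q]
      simp only [add_dotProduct, sub_dotProduct, smul_dotProduct, dotProduct_add,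
        dotProduct_sub, dotProduct_smul, smul_eq_mul, hEq, hFq, hFq', hGq, hν1, hν1',
        hν2, hν2']
      field_simp [hκh q, hD, (by rw [mul_comm]; exact hD : G q * E q - F q ^ 2 ≠ 0)]
      linear_combination ((E q * G q - F q ^ 2) * κh q) * hHrel q
        - ((E q * G q - F q ^ 2) * lam q) * hKrel q
    · have hdvC : dv C q = dv f q + (fderiv ℝ ρ q (0,1)) • ν q + ρ q • dv ν q := key (0,1)
      rw [hdvC, hWv q, hρval q]
      simp only [add_dotProduct, sub_dotProduct, smul_dotProduct, dotProduct_add,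
        dotProduct_sub, dotProduct_smul, smul_eq_mul, hEq, hFq, hFq', hGq, hν1, hν1',
        hν2, hν2']
      field_simp [hκh q, hD, (by rw [mul_comm]; exact hD : G q * E q - F q ^ 2 ≠ 0)]
      ring
  · have h0 : fderiv ℝ C q = 0 := fderiv_zero_of_not_differentiableAt hdiff
    constructor <;> · simp [du, dv, h0]
end
end

section
/- Let f be a front with a singular point of the second kind p and Ĉ = f + ρ̂ν its focal surface associated to the unbounded principal curvature. Then rank dĈ_p = 1: in strongly adapted coordinates Ĉ_u(p) = 0 and Ĉ_v(p) = f_v(p) + (1/μ_c)ν(p) ≠ 0, where μ_c is the normalized cuspidal curvature. Moreover dĈ(Ṽ) = (Ṽρ̂)·ν, so Ṽ is a null vector field of Ĉ along its singular set. -/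
open Matrix

noncomputable section

/-- the focal surface `Ĉ = f + ρ̂ν` has `rank dĈ_p = 1`:
`Ĉ_u(p) = 0`, `Ĉ_v(p) = f_v(p) + (1/μ_c)ν(p) ≠ 0`, and `dĈ(Ṽ) = (Ṽρ̂)·ν`. -/
theorem stmt16 (f ν C : ℝ × ℝ → V3) (ρ : ℝ × ℝ → ℝ) (μc : ℝ) (Vt : ℝ × ℝ → ℝ × ℝ)
    (hf : ContDiff ℝ (⊤ : ℕ∞) f) (hnu : ContDiff ℝ (⊤ : ℕ∞) ν) (hρ : ContDiff ℝ (⊤ : ℕ∞) ρ)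
    (hC : ∀ q : ℝ × ℝ, C q = f q + ρ q • ν q)
    (hρp : ρ (0, 0) = 0) (hρu : du ρ (0, 0) = 0)
    (hμ : μc ≠ 0) (hρv : dv ρ (0, 0) = 1 / μc)
    (hfu : du f (0, 0) = 0) (hfv : dv f (0, 0) ≠ 0)
    (horth : dv f (0, 0) ⬝ᵥ ν (0, 0) = 0) (hunit : ν (0, 0) ⬝ᵥ ν (0, 0) = 1)
    (hRod : ∀ q : ℝ × ℝ, fderiv ℝ f q (Vt q) = (-(ρ q)) • fderiv ℝ ν q (Vt q)) :
    du C (0, 0) = 0 ∧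
    dv C (0, 0) = dv f (0, 0) + (1 / μc) • ν (0, 0) ∧
    dv C (0, 0) ≠ 0 ∧
    Module.finrank ℝ (LinearMap.range (fderiv ℝ C (0, 0)).toLinearMap) = 1 ∧
    (∀ q : ℝ × ℝ, fderiv ℝ C q (Vt q) = (fderiv ℝ ρ q (Vt q)) • ν q) := by
  have hfd : ∀ q, DifferentiableAt ℝ f q := fun q => (hf.differentiable (by simp)) q
  have hnd : ∀ q, DifferentiableAt ℝ ν q := fun q => (hnu.differentiable (by simp)) q
  have hrd : ∀ q, DifferentiableAt ℝ ρ q := fun q => (hρ.differentiable (by simp)) q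
  have hCeq : C = fun q => f q + ρ q • ν q := funext hC
  have hkey : ∀ q (w : ℝ × ℝ), fderiv ℝ C q w
      = fderiv ℝ f q w + (fderiv ℝ ρ q w) • ν q + ρ q • fderiv ℝ ν q w := by
    intro q w
    rw [hCeq, fderiv_fun_add (g := fun y => ρ y • ν y) (hfd q) ((hrd q).smul (hnd q)),
      fderiv_fun_smul (hrd q) (hnd q)]
    simp [ContinuousLinearMap.smulRight_apply]
    abel
  have h1 : du C (0, 0) = 0 := by
    rw [du, hkey]
    rw [show fderiv ℝ f (0,0) (1,0) = du f (0,0) from rfl,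
      show fderiv ℝ ρ (0,0) (1,0) = du ρ (0,0) from rfl, hfu, hρu, hρp]
    simp
  have h2 : dv C (0, 0) = dv f (0, 0) + (1 / μc) • ν (0, 0) := by
    rw [dv, hkey]
    rw [show fderiv ℝ f (0,0) (0,1) = dv f (0,0) from rfl,
      show fderiv ℝ ρ (0,0) (0,1) = dv ρ (0,0) from rfl, hρv, hρp]
    simp
  have h3 : dv C (0, 0) ≠ 0 := by
    rw [h2]
    intro h
    have hdot : (dv f (0, 0) + (1 / μc) • ν (0, 0)) ⬝ᵥ ν (0, 0) = 0 := by
      rw [h]; simp [zero_dotProduct]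
    rw [add_dotProduct, smul_dotProduct, horth, hunit] at hdot
    simp at hdot
    exact hμ hdot
  have hrange : LinearMap.range (fderiv ℝ C (0, 0)).toLinearMap
      = Submodule.span ℝ {dv C (0, 0)} := by
    apply le_antisymm
    · rintro x ⟨w, rfl⟩
      have hw : w = w.1 • ((1 : ℝ), (0 : ℝ)) + w.2 • ((0 : ℝ), (1 : ℝ)) := by
        simp [Prod.ext_iff]
      have : fderiv ℝ C (0, 0) w = w.2 • dv C (0, 0) := by
        rw [hw]
        rw [map_add, (fderiv ℝ C (0,0)).map_smul, (fderiv ℝ C (0,0)).map_smul]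
        rw [show fderiv ℝ C (0,0) (1,0) = du C (0,0) from rfl,
          show fderiv ℝ C (0,0) (0,1) = dv C (0,0) from rfl, h1]
        simp
      simp only [ContinuousLinearMap.coe_coe]
      rw [this]
      exact Submodule.smul_mem _ _ (Submodule.mem_span_singleton_self _)
    · rw [Submodule.span_le, Set.singleton_subset_iff]
      exact ⟨(0, 1), rfl⟩
  have h4 : Module.finrank ℝ (LinearMap.range (fderiv ℝ C (0, 0)).toLinearMap) = 1 := by
    rw [hrange]
    exact finrank_span_singleton h3
  refine ⟨h1, h2, h3, h4, fun q => ?_⟩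
  rw [hkey, hRod q]
  module
end
end
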